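/- Let T be the theory with unary symbols g1,...,gn, an extra unary symbol α, and a binary symbol m, with axioms u_i(x1) = v_i(x1) for i < m and m(uα(x1), x2) = m(vα(x2), x1), where u_i, v_i, u, v are words over {g1,...,gn}. Then for any two words w1, w2 over {g1,...,gn}: the monoid presentation ⟨g1,...,gn | u_i = v_i (i < m)⟩ proves w1 = w2 if and only if T proves w1(x1) = w2(x1). -/

import Mathlib

/-- Terms of the theory `T`: unary symbols `g x` for each letter `x` of the alphabet `Fin N`,
an extra unary symbol `al` (written α), and a binary symbol `m`, in context `x_1, ..., x_n`. -/
inductive TmT (N : ℕ) : ℕ → Type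
  | var {n} : Fin n → TmT N n
  | g {n} : Fin N → TmT N n → TmT N n
  | al {n} : TmT N n → TmT N n
  | m {n} : TmT N n → TmT N n → TmT N n

/-- A word `w` over the alphabet applied to a term as a composite of unary symbols. -/
def wApp {N n : ℕ} (w : List (Fin N)) (t : TmT N n) : TmT N n :=
  w.foldr (fun x s => TmT.g x s) t

/-- Equational provability in the theory `T` with axioms `u_i(x1) = v_i(x1)` (for `i : Fin M`,
where `u_i = ur i`, `v_i = vr i`) and `m(uα(x1), x2) = m(vα(x2), x1)`, closed under
all substitution instances and congruence. -/
inductive ProvT {N : ℕ} (M : ℕ) (ur vr : Fin M → List (Fin N)) (u v : List (Fin N)) :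
    {n : ℕ} → TmT N n → TmT N n → Prop
  | refl {n} (t : TmT N n) : ProvT M ur vr u v t t
  | symm {n} {s t : TmT N n} : ProvT M ur vr u v s t → ProvT M ur vr u v t s
  | trans {n} {s t w : TmT N n} :
      ProvT M ur vr u v s t → ProvT M ur vr u v t w → ProvT M ur vr u v s w
  | congg {n} (x : Fin N) {s t : TmT N n} :
      ProvT M ur vr u v s t → ProvT M ur vr u v (.g x s) (.g x t)
  | congal {n} {s t : TmT N n} : ProvT M ur vr u v s t → ProvT M ur vr u v (.al s) (.al t)
  | congm {n} {a a' b b' : TmT N n} : ProvT M ur vr u v a a' → ProvT M ur vr u v b b' →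
      ProvT M ur vr u v (.m a b) (.m a' b')
  | axu {n} (i : Fin M) (t : TmT N n) : ProvT M ur vr u v (wApp (ur i) t) (wApp (vr i) t)
  | axm {n} (t₁ t₂ : TmT N n) :
      ProvT M ur vr u v (.m (wApp u (.al t₁)) t₂) (.m (wApp v (.al t₂)) t₁)

/-- Provability of word equations from the monoid presentation
`⟨ Fin N | ur i = vr i (i : Fin M) ⟩`: the congruence on the free monoid of words
over `Fin N` generated by the relations. -/
inductive MonProv {N M : ℕ} (ur vr : Fin M → List (Fin N)) :
    List (Fin N) → List (Fin N) → Prop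
  | of (i : Fin M) : MonProv ur vr (ur i) (vr i)
  | refl (w : List (Fin N)) : MonProv ur vr w w
  | symm {a b} : MonProv ur vr a b → MonProv ur vr b a
  | trans {a b c} : MonProv ur vr a b → MonProv ur vr b c → MonProv ur vr a c
  | mul {a b c d} : MonProv ur vr a b → MonProv ur vr c d → MonProv ur vr (a ++ c) (b ++ d)

/-
Every relation is an axiom of `T`. Conversely, the maximal prefix of unary symbols `g` of a term,
read as a word, is invariant modulo the monoid relations under every rule of `T`: the
`α`- and `m`-axioms only relate terms whose prefixes are both empty.
-/

theorem wApp_cons {N n : ℕ} (x : Fin N) (w : List (Fin N)) (t : TmT N n) :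
    wApp (x :: w) t = .g x (wApp w t) := rfl

theorem wApp_append {N n : ℕ} (a b : List (Fin N)) (t : TmT N n) :
    wApp (a ++ b) t = wApp a (wApp b t) :=
  List.foldr_append

def TmT.gPrefix {N n : ℕ} : TmT N n → List (Fin N)
  | .var _ => []
  | .g x t => x :: t.gPrefix
  | .al _ => []
  | .m _ _ => []

theorem TmT.gPrefix_wApp {N n : ℕ} (w : List (Fin N)) (t : TmT N n) :
    (wApp w t).gPrefix = w ++ t.gPrefix := by
  induction w with
  | nil => rfl
  | cons x w ih => rw [wApp_cons, gPrefix, ih, List.cons_append]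

section

variable {N M : ℕ} {ur vr : Fin M → List (Fin N)} {u v : List (Fin N)}

theorem ProvT.wApp_congr {n : ℕ} (w : List (Fin N)) {s t : TmT N n}
    (h : ProvT M ur vr u v s t) : ProvT M ur vr u v (wApp w s) (wApp w t) := by
  induction w with
  | nil => exact h
  | cons x w ih => exact .congg x ih

theorem ProvT.wApp_of_monProv {a b : List (Fin N)} (h : MonProv ur vr a b) {n : ℕ}
    (t : TmT N n) : ProvT M ur vr u v (wApp a t) (wApp b t) := by
  induction h generalizing t with
  | of i => exact .axu i t
  | refl w => exact .refl _
  | symm _ ih => exact (ih t).symm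
  | trans _ _ ih₁ ih₂ => exact (ih₁ t).trans (ih₂ t)
  | @mul a b c d _ _ ih₁ ih₂ =>
    rw [wApp_append, wApp_append]
    exact (ih₁ (wApp c t)).trans (wApp_congr b (ih₂ t))

theorem ProvT.monProv_gPrefix {n : ℕ} {s t : TmT N n} (h : ProvT M ur vr u v s t) :
    MonProv ur vr s.gPrefix t.gPrefix := by
  induction h with
  | refl t => exact .refl _
  | symm _ ih => exact ih.symm
  | trans _ _ ih₁ ih₂ => exact ih₁.trans ih₂
  | congg x _ ih => exact .mul (.refl [x]) ih
  | congal _ => exact .refl []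
  | congm _ _ => exact .refl []
  | axu i t =>
    rw [TmT.gPrefix_wApp, TmT.gPrefix_wApp]
    exact .mul (.of i) (.refl _)
  | axm t₁ t₂ => exact .refl []

end

theorem monoid_iff_theory {N M : ℕ} (ur vr : Fin M → List (Fin N)) (u v : List (Fin N))
    (w₁ w₂ : List (Fin N)) :
    MonProv ur vr w₁ w₂ ↔
      ProvT M ur vr u v (wApp w₁ (TmT.var (0 : Fin 1))) (wApp w₂ (TmT.var 0)) := by
  constructor
  · exact fun h => ProvT.wApp_of_monProv h _
  · intro h
    simpa only [TmT.gPrefix_wApp, TmT.gPrefix, List.append_nil] using h.monProv_gPrefix
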